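/- arXiv:2309.17053 — 2 statements merged into one kernel-verified Lean document; each statement's English description precedes it below -/
import Mathlib

section
/- For a connected graph G and subsets U, U' ⊆ V(G) with |U| ≡ |U'| (mod 2), the CFI graphs CFI(G,U) and CFI(G,U') are isomorphic. -/
open scoped Classical symmDiff

/-- The vertex set of the CFI graph `CFI(G,U)`: pairs `(v,S)` with `S` a set of edges
incident to `v` whose parity matches membership of `v` in `U`. -/
abbrev CFIVert {V : Type*} (G : SimpleGraph V) (U : Set V) : Type _ :=
  {p : V × Finset (Sym2 V) // ↑p.2 ⊆ G.incidenceSet p.1 ∧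
    p.2.card % 2 = (if p.1 ∈ U then 1 else 0)}

/-- The CFI graph `CFI(G,U)`: `(v,S)` and `(u,T)` are adjacent iff `{v,u} ∈ E(G)` and
`{v,u} ∉ S Δ T`. -/
noncomputable def CFI {V : Type*} (G : SimpleGraph V) (U : Set V) :
    SimpleGraph (CFIVert G U) where
  Adj x y := G.Adj x.1.1 y.1.1 ∧ s(x.1.1, y.1.1) ∉ x.1.2 ∆ y.1.2
  symm := ⟨by
    rintro x y ⟨h1, h2⟩
    refine ⟨h1.symm, ?_⟩
    rwa [Sym2.eq_swap, symmDiff_comm]⟩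
  loopless := ⟨fun x h => G.loopless.irrefl _ h.1⟩

lemma card_symmDiff_mod {α : Type*} [DecidableEq α] (A B : Finset α) :
    (A ∆ B).card % 2 = (A.card + B.card) % 2 := by
  have h1 : A ∆ B = (A ∪ B) \ (A ∩ B) := by
    ext x; simp [Finset.mem_symmDiff]; tauto
  have h2 := Finset.card_union_add_card_inter A B
  have h3 : (A ∩ B) ⊆ (A ∪ B) := (Finset.inter_subset_left).trans Finset.subset_union_left
  have h4 := Finset.card_sdiff_of_subset h3
  have h5 := Finset.card_le_card h3
  rw [h1, h4]
  omega

lemma filter_symmDiff' {α : Type*} [DecidableEq α] (A B : Finset α) (P : α → Prop)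
    [DecidablePred P] : (A ∆ B).filter P = A.filter P ∆ B.filter P := by
  ext x; simp [Finset.mem_symmDiff, Finset.mem_filter]; tauto

/-- The key twist isomorphism: an edge set `F` whose odd-degree vertices are exactly the
symmetric difference of `U` and `U'` induces an isomorphism of the CFI graphs. -/
lemma twist_iso {V : Type*} [Fintype V] (G : SimpleGraph V) (U U' : Finset V)
    (F : Finset (Sym2 V)) (hF : ∀ e ∈ F, e ∈ G.edgeSet)
    (hodd : ∀ v : V, (F.filter (fun e => v ∈ e)).card % 2
      = if (v ∈ U) ≠ (v ∈ U') then 1 else 0) :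
    Nonempty (CFI G ↑U ≃g CFI G ↑U') := by
  -- the twisting function
  have key : ∀ (W W' : Finset V),
      (∀ v : V, (F.filter (fun e => v ∈ e)).card % 2
        = if (v ∈ W) ≠ (v ∈ W') then 1 else 0) →
      ∀ p : CFIVert G ↑W,
        (↑(p.1.2 ∆ F.filter (fun e => p.1.1 ∈ e)) : Set (Sym2 V)) ⊆ G.incidenceSet p.1.1 ∧
        (p.1.2 ∆ F.filter (fun e => p.1.1 ∈ e)).card % 2
          = @ite ℕ (p.1.1 ∈ (↑W' : Set V)) (Classical.propDecidable _) 1 0 := by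
    intro W W' ho p
    obtain ⟨⟨v, S⟩, hsub, hpar⟩ := p
    constructor
    · intro e he
      simp only [Finset.coe_symmDiff, Set.mem_symmDiff] at he
      rcases he with ⟨he, _⟩ | ⟨he, _⟩
      · exact hsub he
      · simp only [Finset.mem_coe, Finset.mem_filter] at he
        exact ⟨hF e he.1, he.2⟩
    · have := card_symmDiff_mod S (F.filter (fun e => v ∈ e))
      rw [this]
      have ho' := ho v
      simp only at hpar ho' ⊢
      by_cases h1 : v ∈ W <;> by_cases h2 : v ∈ W' <;>
        simp [h1, h2] at hpar ho' ⊢ <;> omega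
  have hodd' : ∀ v : V, (F.filter (fun e => v ∈ e)).card % 2
      = if (v ∈ U') ≠ (v ∈ U) then 1 else 0 := by
    intro v; rw [hodd v]; congr 1
    simp only [ne_eq, eq_iff_iff]
    tauto
  let f : CFIVert G ↑U → CFIVert G ↑U' := fun p =>
    ⟨(p.1.1, p.1.2 ∆ F.filter (fun e => p.1.1 ∈ e)),
      (key U U' hodd p).1, (key U U' hodd p).2⟩
  let g : CFIVert G ↑U' → CFIVert G ↑U := fun p =>
    ⟨(p.1.1, p.1.2 ∆ F.filter (fun e => p.1.1 ∈ e)),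
      (key U' U hodd' p).1, (key U' U hodd' p).2⟩
  have hfg : ∀ p, g (f p) = p := by
    intro p
    apply Subtype.ext
    simp only [f, g]
    exact Prod.ext rfl (symmDiff_symmDiff_cancel_right _ _)
  have hgf : ∀ p, f (g p) = p := by
    intro p
    apply Subtype.ext
    simp only [f, g]
    exact Prod.ext rfl (symmDiff_symmDiff_cancel_right _ _)
  refine ⟨⟨⟨f, g, hfg, hgf⟩, ?_⟩⟩
  intro x y
  have he : s(x.1.1, y.1.1) ∈ F.filter (fun e => x.1.1 ∈ e) ↔
      s(x.1.1, y.1.1) ∈ F.filter (fun e => y.1.1 ∈ e) := by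
    simp [Finset.mem_filter]
  have hmem : ∀ (e : Sym2 V) (S T A B : Finset (Sym2 V)), (e ∈ A ↔ e ∈ B) →
      (e ∈ (S ∆ A) ∆ (T ∆ B) ↔ e ∈ S ∆ T) := by
    intro e S T A B h
    simp only [Finset.mem_symmDiff]
    tauto
  exact and_congr Iff.rfl (not_congr (hmem _ x.1.2 y.1.2 _ _ he))

lemma exists_F_walk {V : Type*} (G : SimpleGraph V) {a b : V} (w : G.Walk a b) :
    ∃ F : Finset (Sym2 V), (∀ e ∈ F, e ∈ G.edgeSet) ∧
      ∀ v : V, (F.filter (fun e => v ∈ e)).card % 2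
        = if (v = a) ≠ (v = b) then 1 else 0 := by
  induction w with
  | nil => exact ⟨∅, by simp, fun v => by simp⟩
  | @cons a c b h w ih =>
    obtain ⟨F', hF', hpar⟩ := ih
    refine ⟨F' ∆ {s(a, c)}, ?_, ?_⟩
    · intro e he
      rw [Finset.mem_symmDiff] at he
      rcases he with ⟨he, _⟩ | ⟨he, _⟩
      · exact hF' e he
      · simp at he; subst he; exact h
    · intro v
      rw [filter_symmDiff', card_symmDiff_mod, Nat.add_mod, hpar v]
      have h2 : (Finset.filter (fun e => v ∈ e) ({s(a, c)} : Finset (Sym2 V))).card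
          = if v = a ∨ v = c then 1 else 0 := by
        rw [Finset.filter_singleton]
        by_cases hv : v = a ∨ v = c <;> simp [Sym2.mem_iff, hv]
      rw [h2]
      have hac : a ≠ c := h.ne
      by_cases hva : v = a <;> by_cases hvb : v = b <;> by_cases hvc : v = c <;>
        subst_vars <;> simp_all

lemma exists_F_even {V : Type*} (G : SimpleGraph V) (hG : G.Connected) :
    ∀ (n : ℕ) (D : Finset V), D.card = n → Even n →
    ∃ F : Finset (Sym2 V), (∀ e ∈ F, e ∈ G.edgeSet) ∧
      ∀ v : V, (F.filter (fun e => v ∈ e)).card % 2 = if v ∈ D then 1 else 0 := by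
  intro n
  induction n using Nat.strong_induction_on with
  | _ n ih =>
    intro D hcard heven
    rcases D.eq_empty_or_nonempty with rfl | hne
    · exact ⟨∅, by simp, fun v => by simp⟩
    · have h1 : 1 < D.card := by
        rcases heven with ⟨k, hk⟩
        have : D.card ≠ 0 := by simp [Finset.card_eq_zero]; exact hne.ne_empty
        omega
      obtain ⟨x, hx, y, hy, hxy⟩ := Finset.one_lt_card.mp h1
      set D2 := D \ {x, y} with hD2
      have hsub : {x, y} ⊆ D := by
        intro z hz; simp at hz; rcases hz with rfl | rfl <;> assumption
      have hc2 : D2.card = D.card - 2 := by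
        rw [hD2, Finset.card_sdiff_of_subset hsub, Finset.card_pair hxy]
      have hlt : D2.card < n := by omega
      have heven2 : Even D2.card := by
        rcases heven with ⟨k, hk⟩; exact ⟨k - 1, by omega⟩
      obtain ⟨F2, hF2, hpar2⟩ := ih D2.card hlt D2 rfl heven2
      obtain ⟨F1, hF1, hpar1⟩ := exists_F_walk G ((hG.preconnected x y).some)
      refine ⟨F1 ∆ F2, ?_, ?_⟩
      · intro e he
        rw [Finset.mem_symmDiff] at he
        rcases he with ⟨he, _⟩ | ⟨he, _⟩
        · exact hF1 e he
        · exact hF2 e he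
      · intro v
        rw [filter_symmDiff', card_symmDiff_mod, Nat.add_mod, hpar1 v, hpar2 v]
        have hx2 : x ∉ D2 := by simp [hD2]
        have hy2 : y ∉ D2 := by simp [hD2]
        by_cases hvx : v = x
        · subst hvx; simp [hxy, hx2, hx]
        · by_cases hvy : v = y
          · subst hvy; simp [Ne.symm hxy, hy2, hy]
          · have hDD : v ∈ D2 ↔ v ∈ D := by simp [hD2, hvx, hvy]
            by_cases hvD : v ∈ D <;> simp [hvx, hvy, hDD, hvD]

/-- For a connected graph `G` and `U, U' ⊆ V(G)` of equal parity, the CFI graphs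
`CFI(G,U)` and `CFI(G,U')` are isomorphic. -/
theorem stmt9 {V : Type*} [Fintype V] (G : SimpleGraph V) (hG : G.Connected)
    (U U' : Finset V) (h : U.card % 2 = U'.card % 2) :
    Nonempty (CFI G ↑U ≃g CFI G ↑U') := by
  have heven : Even (U ∆ U').card := by
    have := card_symmDiff_mod U U'
    rw [Nat.even_iff]
    omega
  obtain ⟨F, hF, hpar⟩ := exists_F_even G hG (U ∆ U').card (U ∆ U') rfl heven
  apply twist_iso G U U' F hF
  intro v
  rw [hpar v]
  congr 1
  simp only [Finset.mem_symmDiff, eq_iff_iff, ne_eq]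
  tauto
end

section
/- If for two graphs G and H and every graph K with at most max(|V(G)|,|V(H)|) vertices we have homs(K,G) = homs(K,H), then G and H are isomorphic. -/
open Function

namespace Stmt16aux

variable {α β : Type}

noncomputable instance : DecidableEq (Setoid α) := Classical.decEq _

/-- Number of injective homomorphisms. -/
noncomputable def inj (K : SimpleGraph α) (G : SimpleGraph β) : ℕ :=
  Nat.card {f : K →g G // Function.Injective ⇑f}

instance finHom [Finite α] [Finite β] (K : SimpleGraph α) (G : SimpleGraph β) :
    Finite (K →g G) :=
  Finite.of_injective (fun f => (⇑f : α → β)) DFunLike.coe_injective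

noncomputable instance [Finite α] : Fintype (Setoid α) :=
  letI : Finite (Setoid α) :=
    Finite.of_injective (fun s => s.r)
      (fun a b h => Setoid.ext (by rw [show a.r = b.r from h]; exact fun _ _ => Iff.rfl))
  Fintype.ofFinite _

/-- Quotient graph of `K` by a setoid `s`. -/
def quotGraph (K : SimpleGraph α) (s : Setoid α) : SimpleGraph (Quotient s) where
  Adj a b := a ≠ b ∧ ∃ u v, Quotient.mk s u = a ∧ Quotient.mk s v = b ∧ K.Adj u v
  symm := ⟨fun a b ⟨hne, u, v, hu, hv, huv⟩ => ⟨hne.symm, v, u, hv, hu, huv.symm⟩⟩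
  loopless := ⟨fun a ⟨hne, _⟩ => hne rfl⟩

/-- `s` collapses no edge of `K`. -/
def NoCollapse (K : SimpleGraph α) (s : Setoid α) : Prop :=
  ∀ u v, K.Adj u v → ¬ s u v

/-- Number of homomorphisms with kernel `s`. -/
noncomputable def fib (K : SimpleGraph α) (G : SimpleGraph β) (s : Setoid α) : ℕ :=
  Nat.card {f : K →g G // Setoid.ker ⇑f = s}

lemma fib_bad (K : SimpleGraph α) (G : SimpleGraph β) {s : Setoid α}
    (hs : ¬ NoCollapse K s) : fib K G s = 0 := by
  have : IsEmpty {f : K →g G // Setoid.ker ⇑f = s} := by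
    constructor
    rintro ⟨f, hf⟩
    simp only [NoCollapse, not_forall, not_not] at hs
    obtain ⟨u, v, huv, hsuv⟩ := hs
    have hker : Setoid.ker ⇑f u v := hf ▸ hsuv
    have hfe : f u = f v := hker
    have hadj := f.map_adj huv
    rw [hfe] at hadj
    exact G.loopless.irrefl _ hadj
  simp [fib, Nat.card_of_isEmpty]

/-- Homomorphisms with kernel `s` (a non-collapsing setoid) correspond to injective
homomorphisms from the quotient graph. -/
noncomputable def goodEquiv (K : SimpleGraph α) (G : SimpleGraph β) (s : Setoid α)
    (hs : NoCollapse K s) :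
    {f : K →g G // Setoid.ker ⇑f = s} ≃ {g : quotGraph K s →g G // Injective ⇑g} where
  toFun := fun ⟨f, hf⟩ =>
    ⟨⟨Quotient.lift ⇑f (fun u v h => show Setoid.ker ⇑f u v from hf ▸ h), by
        rintro a b ⟨hne, u, v, hu, hv, huv⟩
        subst hu; subst hv
        exact f.map_adj huv⟩, by
      rintro ⟨u⟩ ⟨v⟩ h
      exact Quotient.sound (hf ▸ (show Setoid.ker ⇑f u v from h))⟩
  invFun := fun ⟨g, hg⟩ =>
    ⟨⟨fun u => g (Quotient.mk s u), fun {u v} huv =>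
        g.map_adj ⟨fun he => hs u v huv (Quotient.exact he), u, v, rfl, rfl, huv⟩⟩, by
      apply Setoid.ext
      intro u v
      constructor
      · intro h
        exact Quotient.exact (hg (h : g (Quotient.mk s u) = g (Quotient.mk s v)))
      · intro h
        exact show g _ = g _ from congrArg g (Quotient.sound h)⟩
  left_inv := fun ⟨f, hf⟩ => Subtype.ext (DFunLike.ext _ _ (fun u => rfl))
  right_inv := fun ⟨g, hg⟩ => Subtype.ext (DFunLike.ext _ _ (fun a =>
    Quotient.inductionOn a fun u => rfl))

lemma fib_good (K : SimpleGraph α) (G : SimpleGraph β) (s : Setoid α)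
    (hs : NoCollapse K s) : fib K G s = inj (quotGraph K s) G :=
  Nat.card_congr (goodEquiv K G s hs)

lemma nat_card_sigma {ι : Type} [Fintype ι] (F : ι → Type) [∀ i, Finite (F i)] :
    Nat.card (Σ i, F i) = ∑ i, Nat.card (F i) := by
  letI : ∀ i, Fintype (F i) := fun i => Fintype.ofFinite _
  simp [Nat.card_eq_fintype_card, Fintype.card_sigma]

lemma fib_bot (K : SimpleGraph α) (G : SimpleGraph β) : fib K G ⊥ = inj K G := by
  unfold fib inj
  apply Nat.card_congr
  exact Equiv.subtypeEquivRight (fun f => (Setoid.injective_iff_ker_bot ⇑f).symm)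

lemma hom_card [Finite α] [Finite β] (K : SimpleGraph α) (G : SimpleGraph β) :
    Nat.card (K →g G) = inj K G + ∑ s ∈ Finset.univ.erase (⊥ : Setoid α), fib K G s := by
  have h1 : Nat.card (K →g G) = ∑ s : Setoid α, fib K G s := by
    rw [← Nat.card_congr (Equiv.sigmaFiberEquiv (fun f : K →g G => Setoid.ker ⇑f))]
    exact nat_card_sigma _
  rw [h1, ← Finset.add_sum_erase _ _ (Finset.mem_univ (⊥ : Setoid α)), fib_bot]

lemma inj_iso {α' : Type} {K : SimpleGraph α} {K' : SimpleGraph α'} (e : K ≃g K')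
    (G : SimpleGraph β) : inj K G = inj K' G := by
  apply Nat.card_congr
  refine ⟨fun ⟨f, hf⟩ => ⟨f.comp e.symm.toHom, hf.comp e.symm.toEquiv.injective⟩,
    fun ⟨f, hf⟩ => ⟨f.comp e.toHom, hf.comp e.toEquiv.injective⟩, ?_, ?_⟩
  · rintro ⟨f, hf⟩
    exact Subtype.ext (DFunLike.ext _ _ (fun u => congrArg f (e.symm_apply_apply u)))
  · rintro ⟨f, hf⟩
    exact Subtype.ext (DFunLike.ext _ _ (fun u => congrArg f (e.apply_symm_apply u)))

/-- Key induction: equal hom counts from all small graphs force equal injective hom counts. -/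
lemma inj_eq_of_hom_eq {VG VH : Type} [Fintype VG] [Fintype VH]
    (G : SimpleGraph VG) (H : SimpleGraph VH) (N : ℕ)
    (h : ∀ n : ℕ, n ≤ N → ∀ K : SimpleGraph (Fin n),
      Nat.card (K →g G) = Nat.card (K →g H)) :
    ∀ n : ℕ, n ≤ N → ∀ K : SimpleGraph (Fin n), inj K G = inj K H := by
  intro n
  induction n using Nat.strong_induction_on with
  | _ n ih =>
    intro hn K
    have key : ∀ s ∈ Finset.univ.erase (⊥ : Setoid (Fin n)), fib K G s = fib K H s := by
      intro s hsmem
      have hs : s ≠ ⊥ := (Finset.mem_erase.mp hsmem).1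
      by_cases hg : NoCollapse K s
      · rw [fib_good K G s hg, fib_good K H s hg]
        obtain ⟨u, v, hne, hsuv⟩ : ∃ u v, u ≠ v ∧ s u v := by
          by_contra hc
          push_neg at hc
          refine hs (Setoid.ext fun a b => ⟨fun h' => ?_, fun h' => ?_⟩)
          · by_contra hab
            exact hc a b hab h'
          · exact h' ▸ s.refl a
        letI : Fintype (Quotient s) := Fintype.ofFinite _
        have hninj : ¬ Injective (Quotient.mk s) := fun hinj =>
          hne (hinj (Quotient.sound hsuv))
        have hlt : Fintype.card (Quotient s) < n := by
          have := Fintype.card_lt_of_surjective_not_injective (Quotient.mk s)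
            Quotient.mk_surjective hninj
          simpa using this
        set m := Fintype.card (Quotient s) with hm
        let e : Quotient s ≃ Fin m := Fintype.equivFin _
        have iso := SimpleGraph.Iso.comap e.symm (quotGraph K s)
        have h1 := inj_iso iso.symm G
        have h2 := inj_iso iso.symm H
        rw [h1, h2]
        exact ih m hlt (le_trans (le_of_lt hlt) hn) _
      · rw [fib_bad K G hg, fib_bad K H hg]
    have hG := hom_card K G
    have hH := hom_card K H
    have hKK := h n hn K
    rw [hG, hH, Finset.sum_congr rfl key] at hKK
    exact Nat.add_right_cancel hKK

/-- Injective homomorphisms in both directions between finite graphs give an isomorphism. -/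
lemma iso_of_inj_homs {VG VH : Type} [Fintype VG] [Fintype VH]
    {G : SimpleGraph VG} {H : SimpleGraph VH}
    (f : G →g H) (hf : Injective ⇑f) (g : H →g G) (hg : Injective ⇑g) :
    Nonempty (G ≃g H) := by
  have hcard : Fintype.card VG = Fintype.card VH :=
    le_antisymm (Fintype.card_le_of_injective _ hf) (Fintype.card_le_of_injective _ hg)
  have hfbij : Bijective ⇑f := (Fintype.bijective_iff_injective_and_card ⇑f).mpr ⟨hf, hcard⟩
  -- the composite is a bijective endo-homomorphism, hence reflects adjacency
  have hφinj : Injective (⇑g ∘ ⇑f) := hg.comp hf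
  have hrefl : ∀ u v : VG, G.Adj (g (f u)) (g (f v)) → G.Adj u v := by
    intro u v hadj
    let S := {p : VG × VG // G.Adj p.1 p.2}
    let Ψ : S → S := fun p => ⟨(g (f p.1.1), g (f p.1.2)), g.map_adj (f.map_adj p.2)⟩
    have hΨinj : Injective Ψ := by
      rintro ⟨⟨a, b⟩, hab⟩ ⟨⟨c, d⟩, hcd⟩ hpq
      have h1 : g (f a) = g (f c) := congrArg (fun x => x.1.1) hpq
      have h2 : g (f b) = g (f d) := congrArg (fun x => x.1.2) hpq
      exact Subtype.ext (Prod.ext (hφinj h1) (hφinj h2))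
    have hΨsurj : Surjective Ψ := Finite.surjective_of_injective hΨinj
    obtain ⟨⟨⟨a, b⟩, hab⟩, hq⟩ := hΨsurj ⟨(g (f u), g (f v)), hadj⟩
    have h1 : g (f a) = g (f u) := congrArg (fun x => x.1.1) hq
    have h2 : g (f b) = g (f v) := congrArg (fun x => x.1.2) hq
    rwa [hφinj h1, hφinj h2] at hab
  exact ⟨⟨Equiv.ofBijective ⇑f hfbij, by
    intro u v
    exact ⟨fun hadj => hrefl u v (g.map_adj hadj), fun hadj => f.map_adj hadj⟩⟩⟩

end Stmt16aux

open Stmt16aux in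
/-- Lovász: if `G` and `H` admit the same number of homomorphisms from every graph `K`
with at most `max |V(G)| |V(H)|` vertices, then `G ≅ H`. -/
theorem stmt16 {VG VH : Type} [Fintype VG] [Fintype VH]
    (G : SimpleGraph VG) (H : SimpleGraph VH)
    (h : ∀ n : ℕ, n ≤ max (Fintype.card VG) (Fintype.card VH) →
      ∀ K : SimpleGraph (Fin n), Nat.card (K →g G) = Nat.card (K →g H)) :
    Nonempty (G ≃g H) := by
  set N := max (Fintype.card VG) (Fintype.card VH) with hN
  have hinj := inj_eq_of_hom_eq G H N h
  have hinj' := inj_eq_of_hom_eq H G N (fun n hn K => (h n hn K).symm)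
  -- transport G to Fin (card VG)
  obtain ⟨fGH, hfGH⟩ : ∃ f : G →g H, Injective ⇑f := by
    let e := Fintype.equivFin VG
    have isoG := SimpleGraph.Iso.comap e.symm G
    have h1 : 0 < inj (SimpleGraph.comap (⇑e.symm.toEmbedding) G) G := by
      have : Nonempty {f : SimpleGraph.comap (⇑e.symm.toEmbedding) G →g G // Injective ⇑f} :=
        ⟨⟨isoG.toHom, isoG.toEquiv.injective⟩⟩
      exact Nat.card_pos
    have h2 := hinj (Fintype.card VG) (le_max_left _ _)
      (SimpleGraph.comap (⇑e.symm.toEmbedding) G)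
    rw [h2] at h1
    obtain ⟨⟨f0, hf0⟩⟩ := (Nat.card_pos_iff.mp h1).1
    exact ⟨f0.comp isoG.symm.toHom, hf0.comp isoG.symm.toEquiv.injective⟩
  obtain ⟨fHG, hfHG⟩ : ∃ f : H →g G, Injective ⇑f := by
    let e := Fintype.equivFin VH
    have isoH := SimpleGraph.Iso.comap e.symm H
    have h1 : 0 < inj (SimpleGraph.comap (⇑e.symm.toEmbedding) H) H := by
      have : Nonempty {f : SimpleGraph.comap (⇑e.symm.toEmbedding) H →g H // Injective ⇑f} :=
        ⟨⟨isoH.toHom, isoH.toEquiv.injective⟩⟩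
      exact Nat.card_pos
    have h2 := hinj' (Fintype.card VH) (le_max_right _ _)
      (SimpleGraph.comap (⇑e.symm.toEmbedding) H)
    rw [h2] at h1
    obtain ⟨⟨f0, hf0⟩⟩ := (Nat.card_pos_iff.mp h1).1
    exact ⟨f0.comp isoH.symm.toHom, hf0.comp isoH.symm.toEquiv.injective⟩
  exact iso_of_inj_homs fGH hfGH fHG hfHG
end
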